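/- Any critical point R of G(R) = (1/m) Σ_i √(δ_TSL(R,R_i)) with R ≠ R_i for all i satisfies R = (Σ_j w_j)⁻¹ Σ_i w_i R_i where w_i = 1/(√(δ_TSL(R,R_i)) √(1+‖R_i‖²)); i.e., the TSL median is a weighted average of the data with these weights. -/

import Mathlib

open Matrix ComplexOrder

noncomputable def fnorm {N : ℕ} (A : Matrix (Fin N) (Fin N) ℂ) : ℝ :=
  Real.sqrt ((Aᴴ * A).trace.re)

noncomputable def rinner {N : ℕ} (A B : Matrix (Fin N) (Fin N) ℂ) : ℝ :=
  ((Aᴴ * B).trace).re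

noncomputable def deltaTSL {N : ℕ} (Y Z : Matrix (Fin N) (Fin N) ℂ) : ℝ :=
  fnorm (Y - Z) ^ 2 / (2 * Real.sqrt (1 + fnorm Z ^ 2))

-- Principal matrix logarithm: the logarithm whose spectrum lies in the
-- horizontal strip `{z | -π < Im z < π}` (0 if no such logarithm exists).
open Classical in
noncomputable def mLog {N : ℕ} (A : Matrix (Fin N) (Fin N) ℂ) : Matrix (Fin N) (Fin N) ℂ :=
  if h : ∃ L : Matrix (Fin N) (Fin N) ℂ, NormedSpace.exp L = A ∧
      ∀ μ ∈ spectrum ℂ L, μ.im ∈ Set.Ioo (-Real.pi) Real.pi then h.choose else 0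

-- The positive-semidefinite square root (0 for non-PSD matrices).
open Classical in
noncomputable def msqrt {N : ℕ} (A : Matrix (Fin N) (Fin N) ℂ) : Matrix (Fin N) (Fin N) ℂ :=
  if h : A.PosSemidef then (h.1.eigenvectorUnitary : Matrix (Fin N) (Fin N) ℂ) *
    diagonal ((↑) ∘ Real.sqrt ∘ h.1.eigenvalues) *
    (star (h.1.eigenvectorUnitary : Matrix (Fin N) (Fin N) ℂ)) else 0

/-! At a critical point `X` the derivative of `G` along every Hermitian direction `H` vanishes.
Since `‖X - R i + ε • H‖²` is quadratic in `ε`, the derivative of `√δ_TSL(X + ε • H, R i)` at `0`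
is `(w i / 2) ⟨X - R i, H⟩`, so `⟨∑ i, w i • (X - R i), H⟩ = 0` for every Hermitian `H`. Testing
with `H = ∑ i, w i • (X - R i)` itself, which is Hermitian because `X` and the `R i` are, gives
`∑ i, w i • (X - R i) = 0`, and solving for `X` yields the weighted average. -/

section RealInner

variable {N : ℕ}

lemma rinner_self_nonneg (A : Matrix (Fin N) (Fin N) ℂ) : 0 ≤ rinner A A :=
  (Complex.nonneg_iff.1 (posSemidef_conjTranspose_mul_self A).trace_nonneg).1

lemma rinner_self_pos {A : Matrix (Fin N) (Fin N) ℂ} (hA : A ≠ 0) : 0 < rinner A A :=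
  (Complex.pos_iff.1 <| (posSemidef_conjTranspose_mul_self A).trace_nonneg.lt_of_ne' <|
    trace_conjTranspose_mul_self_eq_zero_iff.not.2 hA).1

lemma fnorm_sq (A : Matrix (Fin N) (Fin N) ℂ) : fnorm A ^ 2 = rinner A A :=
  Real.sq_sqrt (rinner_self_nonneg A)

lemma rinner_comm (A B : Matrix (Fin N) (Fin N) ℂ) : rinner A B = rinner B A := by
  rw [rinner, rinner, ← conjTranspose_conjTranspose A, ← conjTranspose_mul, trace_conjTranspose,
    conjTranspose_conjTranspose, RCLike.star_def, Complex.conj_re]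

lemma rinner_add_left (A B C : Matrix (Fin N) (Fin N) ℂ) :
    rinner (A + B) C = rinner A C + rinner B C := by
  simp only [rinner, conjTranspose_add, add_mul, trace_add, Complex.add_re]

lemma rinner_smul_left (c : ℝ) (A B : Matrix (Fin N) (Fin N) ℂ) :
    rinner (c • A) B = c * rinner A B := by
  simp only [rinner, conjTranspose_smul, star_trivial, smul_mul_assoc, trace_smul,
    Complex.real_smul, Complex.re_ofReal_mul]

lemma rinner_add_right (A B C : Matrix (Fin N) (Fin N) ℂ) :
    rinner A (B + C) = rinner A B + rinner A C := by
  rw [rinner_comm, rinner_add_left, rinner_comm B, rinner_comm C]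

lemma rinner_smul_right (c : ℝ) (A B : Matrix (Fin N) (Fin N) ℂ) :
    rinner A (c • B) = c * rinner A B := by
  rw [rinner_comm, rinner_smul_left, rinner_comm]

lemma rinner_sum_smul_left {ι : Type*} [Fintype ι] (c : ι → ℝ)
    (A : ι → Matrix (Fin N) (Fin N) ℂ) (B : Matrix (Fin N) (Fin N) ℂ) :
    rinner (∑ i, c i • A i) B = ∑ i, c i * rinner (A i) B := by
  simp only [rinner, conjTranspose_sum, Finset.sum_mul, trace_sum, Complex.re_sum]
  exact Finset.sum_congr rfl fun i _ => rinner_smul_left (c i) (A i) B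

lemma rinner_add_smul_self (A B : Matrix (Fin N) (Fin N) ℂ) (ε : ℝ) :
    rinner (A + ε • B) (A + ε • B) = rinner A A + 2 * rinner A B * ε + rinner B B * ε ^ 2 := by
  simp only [rinner_add_left, rinner_add_right, rinner_smul_left, rinner_smul_right]
  rw [rinner_comm B A]
  ring

lemma eq_zero_of_rinner_eq_zero {S : Matrix (Fin N) (Fin N) ℂ} (hS : S.IsHermitian)
    (h : ∀ H : Matrix (Fin N) (Fin N) ℂ, H.IsHermitian → rinner S H = 0) : S = 0 := by
  by_contra hS0
  exact (rinner_self_pos hS0).ne' (h S hS)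

end RealInner

noncomputable def tslWeight {N : ℕ} (X Z : Matrix (Fin N) (Fin N) ℂ) : ℝ :=
  1 / (Real.sqrt (deltaTSL X Z) * Real.sqrt (1 + fnorm Z ^ 2))

lemma deltaTSL_pos {N : ℕ} {X Z : Matrix (Fin N) (Fin N) ℂ} (hXZ : X ≠ Z) :
    0 < deltaTSL X Z := by
  rw [deltaTSL, fnorm_sq]
  exact div_pos (rinner_self_pos (sub_ne_zero.2 hXZ)) (by positivity)

lemma tslWeight_pos {N : ℕ} {X Z : Matrix (Fin N) (Fin N) ℂ} (hXZ : X ≠ Z) :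
    0 < tslWeight X Z := by
  have := deltaTSL_pos hXZ
  unfold tslWeight
  positivity

lemma hasDerivAt_rinner_add_smul_self {N : ℕ} (A B : Matrix (Fin N) (Fin N) ℂ) :
    HasDerivAt (fun ε : ℝ => rinner (A + ε • B) (A + ε • B)) (2 * rinner A B) 0 := by
  simp only [rinner_add_smul_self]
  simpa using (((hasDerivAt_id (0 : ℝ)).const_mul (2 * rinner A B)).const_add (rinner A A)).fun_add
    ((hasDerivAt_pow 2 (0 : ℝ)).const_mul (rinner B B))

lemma hasDerivAt_sqrt_deltaTSL_add_smul {N : ℕ} {X Z : Matrix (Fin N) (Fin N) ℂ} (hXZ : X ≠ Z)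
    (H : Matrix (Fin N) (Fin N) ℂ) :
    HasDerivAt (fun ε : ℝ => Real.sqrt (deltaTSL (X + ε • H) Z))
      (tslWeight X Z / 2 * rinner (X - Z) H) 0 := by
  have hδ : HasDerivAt (fun ε : ℝ => deltaTSL (X + ε • H) Z)
      (2 * rinner (X - Z) H / (2 * Real.sqrt (1 + fnorm Z ^ 2))) 0 := by
    have hexp : (fun ε : ℝ => deltaTSL (X + ε • H) Z) = fun ε : ℝ =>
        rinner (X - Z + ε • H) (X - Z + ε • H) / (2 * Real.sqrt (1 + fnorm Z ^ 2)) := by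
      funext ε
      rw [deltaTSL, fnorm_sq, add_sub_right_comm]
    rw [hexp]
    exact (hasDerivAt_rinner_add_smul_self (X - Z) H).div_const _
  convert hδ.sqrt (by simpa using (deltaTSL_pos hXZ).ne') using 1
  simp only [zero_smul, add_zero, tslWeight]
  field_simp

lemma eq_inv_sum_smul_sum_smul_of_sum_smul_sub_eq_zero {K V ι : Type*} [DivisionRing K]
    [AddCommGroup V] [Module K V] [Fintype ι] {w : ι → K} {x : V} {r : ι → V}
    (h : ∑ i, w i • (x - r i) = 0) (hw : ∑ i, w i ≠ 0) :
    x = (∑ i, w i)⁻¹ • ∑ i, w i • r i := by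
  simp only [smul_sub, Finset.sum_sub_distrib, ← Finset.sum_smul, sub_eq_zero] at h
  rw [← h, inv_smul_smul₀ hw]

/-- a critical point of the TSL-median objective
`G(R) = (1/m) Σ_i √(δ_TSL(R,R_i))` (criticality expressed through vanishing directional
derivatives along all Hermitian directions) with `R ≠ R_i` for all `i` is the weighted
average of the data with weights `w_i = 1/(√(δ_TSL(R,R_i)) √(1+‖R_i‖²))`. -/
theorem tslMedian_critical_point_eq_weighted_average {N m : ℕ} (hm : 0 < m)
    (R : Fin m → Matrix (Fin N) (Fin N) ℂ) (hR : ∀ i, (R i).PosDef)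
    (X : Matrix (Fin N) (Fin N) ℂ) (hX : X.IsHermitian)
    (hne : ∀ i, X ≠ R i)
    (hcrit : ∀ H : Matrix (Fin N) (Fin N) ℂ, H.IsHermitian →
      HasDerivAt (fun ε : ℝ =>
        (1 / (m : ℝ)) * ∑ i, Real.sqrt (deltaTSL (X + ε • H) (R i))) 0 0) :
    X = (∑ j, (1 / (Real.sqrt (deltaTSL X (R j)) * Real.sqrt (1 + fnorm (R j) ^ 2))))⁻¹ •
        ∑ i, (1 / (Real.sqrt (deltaTSL X (R i)) * Real.sqrt (1 + fnorm (R i) ^ 2))) • R i := by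
  set w : Fin m → ℝ := fun i => tslWeight X (R i)
  have hstationary : ∀ H : Matrix (Fin N) (Fin N) ℂ, H.IsHermitian →
      rinner (∑ i, w i • (X - R i)) H = 0 := by
    intro H hH
    have hderiv := ((HasDerivAt.fun_sum fun i _ => hasDerivAt_sqrt_deltaTSL_add_smul (hne i) H
      ).const_mul (1 / (m : ℝ))).unique (hcrit H hH)
    have hscaled : 1 / (2 * m : ℝ) * ∑ i, w i * rinner (X - R i) H = 0 := by
      rw [← hderiv, Finset.mul_sum, Finset.mul_sum]
      exact Finset.sum_congr rfl fun i _ => by ring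
    rw [rinner_sum_smul_left]
    exact (mul_eq_zero.1 hscaled).resolve_left (by positivity)
  have hherm : (∑ i, w i • (X - R i)).IsHermitian :=
    isSelfAdjoint_sum _ fun i _ => (hX.sub (hR i).isHermitian).smul (IsSelfAdjoint.all (w i))
  have hw_sum : 0 < ∑ i, w i :=
    Finset.sum_pos (fun i _ => tslWeight_pos (hne i)) ⟨⟨0, hm⟩, Finset.mem_univ _⟩
  exact eq_inv_sum_smul_sum_smul_of_sum_smul_sub_eq_zero
    (eq_zero_of_rinner_eq_zero hherm hstationary) hw_sum.ne'
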